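/- Let G have conductance Φ_G and let T be an HC tree with dense branch (A_0, ..., A_k), where B_i is the sibling of A_i for 1 ≤ i ≤ k. Then cost_G(T) ≥ (Φ_G/2) · Σ_{i=1}^{k} |A_{i-1}| · vol(B_i). -/

import Mathlib

open Finset

/-- A hierarchical clustering (HC) tree: a binary tree with vertex-labelled leaves. -/
inductive HCTree (V : Type) where
  | leaf (v : V) : HCTree V
  | node (l r : HCTree V) : HCTree V

namespace HCTree

variable {V : Type} [Fintype V] [DecidableEq V]

/-- The list of leaf labels of an HC tree. -/
def leafList : HCTree V → List V
  | leaf v => [v]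
  | node l r => leafList l ++ leafList r

/-- The set of leaves of an HC tree. -/
def leaves (t : HCTree V) : Finset V := t.leafList.toFinset

/-- Total weight of (ordered) pairs between two vertex sets:
`w(S,T) = ∑_{u ∈ S, v ∈ T} w(u,v)`. -/
def cut (w : V → V → ℝ) (S T : Finset V) : ℝ := ∑ u ∈ S, ∑ v ∈ T, w u v

/-- The (weighted) degree of a vertex: `d_u = ∑_v w(u,v)`. -/
def deg (w : V → V → ℝ) (u : V) : ℝ := ∑ v, w u v

/-- The volume of a vertex set: `vol(S) = ∑_{u ∈ S} d_u`. -/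
def vol (w : V → V → ℝ) (S : Finset V) : ℝ := ∑ u ∈ S, deg w u

/-- Dasgupta's cost of an HC tree, via the equivalent internal-node formula:
`cost(T) = ∑_{N → (N₁,N₂)} |leaves(T[N])| · w(leaves(N₁), leaves(N₂))`. -/
def cost (w : V → V → ℝ) : HCTree V → ℝ
  | leaf _ => 0
  | node l r =>
      ((leaves (node l r)).card : ℝ) * cut w (leaves l) (leaves r)
        + cost w l + cost w r

/-- `t` is an HC tree of the graph on vertex set `V`: its leaves are distinct
and are exactly the vertices of `V`. -/
def isHC (t : HCTree V) : Prop := t.leafList.Nodup ∧ t.leaves = Finset.univ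

end HCTree

namespace HCTree

variable {V : Type} [Fintype V] [DecidableEq V]

/-- `DenseBranch w t k A B` says that `(A 0, …, A k)` is the dense branch of the HC tree `t`,
with `B (i+1)` the sibling of `A (i+1)`: `A 0` is the root, each `A (i+1)` is the child of
`A i` of higher volume, every node on the branch has volume greater than `vol(G)/2`,
and both children of the final node `A k` have volume at most `vol(G)/2`. -/
def DenseBranch (w : V → V → ℝ) (t : HCTree V) (k : ℕ)
    (A B : ℕ → HCTree V) : Prop :=
  A 0 = t ∧
  (∀ i < k,
      (A i = HCTree.node (A (i+1)) (B (i+1)) ∨ A i = HCTree.node (B (i+1)) (A (i+1))) ∧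
      vol w (leaves (B (i+1))) ≤ vol w (leaves (A (i+1)))) ∧
  (∀ i ≤ k, vol w (Finset.univ : Finset V) / 2 < vol w (leaves (A i))) ∧
  (∃ l r, A k = HCTree.node l r ∧
      vol w (leaves l) ≤ vol w (Finset.univ : Finset V) / 2 ∧
      vol w (leaves r) ≤ vol w (Finset.univ : Finset V) / 2)

end HCTree

/-!
Every vertex set `B_{i+1}` hanging off the dense branch has volume at most `vol(G)/2`, so
conductance gives `Φ·vol(B_{i+1}) ≤ w(B_{i+1}, B_{i+1}ᶜ)`. The complement of `B_{i+1}` is `A_{i+1}`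
together with the earlier siblings `B_{j+1}`, `j < i`. Since the weights `|A_i|` decrease along the
branch and `B_{i+1} ⊆ A_{j+1}` for `j < i`, the edges to earlier siblings are charged at most once
more to the term `|A_j|·w(B_{j+1}, A_{j+1})`, which is exactly what the split of `A_j` contributes
to the cost. Hence `∑ |A_i|·Φ·vol(B_{i+1}) ≤ 2·∑ |A_i|·w(B_{i+1}, A_{i+1}) ≤ 2·cost(T)`.
-/

namespace HCTree

section Cut

variable {V : Type} {w : V → V → ℝ}

lemma cut_nonneg (hw : ∀ u v, 0 ≤ w u v) (S T : Finset V) : 0 ≤ cut w S T :=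
  sum_nonneg fun u _ => sum_nonneg fun v _ => hw u v

lemma cut_comm (hsymm : ∀ u v, w u v = w v u) (S T : Finset V) : cut w S T = cut w T S := by
  rw [cut, cut, sum_comm]
  exact sum_congr rfl fun u _ => sum_congr rfl fun v _ => hsymm v u

lemma cut_union_right [DecidableEq V] (S : Finset V) {T₁ T₂ : Finset V} (h : Disjoint T₁ T₂) :
    cut w S (T₁ ∪ T₂) = cut w S T₁ + cut w S T₂ := by
  simp only [cut, sum_union h, sum_add_distrib]

lemma cut_add_cut_compl [Fintype V] [DecidableEq V] (S T : Finset V) :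
    cut w S T + cut w S Tᶜ = cut w S univ := by
  rw [← cut_union_right S disjoint_compl_right, union_compl]

lemma vol_union [Fintype V] [DecidableEq V] {S T : Finset V} (h : Disjoint S T) :
    vol w (S ∪ T) = vol w S + vol w T :=
  sum_union h

lemma vol_le_vol_univ [Fintype V] (hw : ∀ u v, 0 ≤ w u v) (S : Finset V) :
    vol w S ≤ vol w univ :=
  sum_le_sum_of_subset_of_nonneg (subset_univ S) fun u _ _ => sum_nonneg fun v _ => hw u v

end Cut

section Chain

variable {V : Type} [DecidableEq V] {w : V → V → ℝ} {α β : ℕ → Finset V} {k : ℕ}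

def IsChainSplit (α β : ℕ → Finset V) (k : ℕ) : Prop :=
  ∀ i < k, Disjoint (α (i + 1)) (β i) ∧ α i = α (i + 1) ∪ β i

lemma IsChainSplit.subset (hsplit : IsChainSplit α β k) {i j : ℕ} (hij : i ≤ j) (hjk : j ≤ k) :
    α j ⊆ α i := by
  induction j, hij using Nat.le_induction with
  | base => exact subset_rfl
  | succ n hn ih =>
    rw [(hsplit n (by omega)).2] at ih
    exact subset_union_left.trans (ih (by omega))

lemma IsChainSplit.antitoneOn_card (hsplit : IsChainSplit α β k) :
    AntitoneOn (fun i => ((α i).card : ℝ)) (Set.Iio k) :=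
  fun _ _ _ hj hij => Nat.cast_le.2 (card_le_card (hsplit.subset hij (le_of_lt hj)))

lemma IsChainSplit.cut_eq_add_sum (hsplit : IsChainSplit α β k) (S : Finset V) {a b : ℕ}
    (hab : a ≤ b) (hbk : b ≤ k) :
    cut w S (α a) = cut w S (α b) + ∑ j ∈ Ico a b, cut w S (β j) := by
  induction b, hab using Nat.le_induction with
  | base => simp
  | succ n hn ih =>
    obtain ⟨hdisj, hα⟩ := hsplit n (by omega)
    rw [ih (by omega), sum_Ico_succ_top hn, hα, cut_union_right S hdisj]
    ring

lemma IsChainSplit.cut_compl_eq [Fintype V] (hsplit : IsChainSplit α β k) (huniv : α 0 = univ)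
    {i : ℕ} (hi : i < k) :
    cut w (β i) (β i)ᶜ = cut w (β i) (α (i + 1)) + ∑ j ∈ range i, cut w (β i) (β j) := by
  have htel := hsplit.cut_eq_add_sum (w := w) (β i) (Nat.zero_le (i + 1)) hi
  rw [huniv, ← range_eq_Ico, sum_range_succ, ← cut_add_cut_compl (β i) (β i)] at htel
  linarith

lemma IsChainSplit.sum_cut_Ico_le (hw : ∀ u v, 0 ≤ w u v) (hsplit : IsChainSplit α β k)
    {j : ℕ} (hj : j < k) :
    ∑ i ∈ Ico (j + 1) k, cut w (β j) (β i) ≤ cut w (β j) (α (j + 1)) := by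
  rw [hsplit.cut_eq_add_sum (β j) hj le_rfl]
  exact le_add_of_nonneg_left (cut_nonneg hw _ _)

lemma IsChainSplit.sum_mul_cut_compl_le [Fintype V] (hw : ∀ u v, 0 ≤ w u v)
    (hsymm : ∀ u v, w u v = w v u) (hsplit : IsChainSplit α β k) (huniv : α 0 = univ)
    {a : ℕ → ℝ} (ha : ∀ i, 0 ≤ a i) (hanti : AntitoneOn a (Set.Iio k)) :
    ∑ i ∈ range k, a i * cut w (β i) (β i)ᶜ ≤
      2 * ∑ i ∈ range k, a i * cut w (β i) (α (i + 1)) := by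
  have hearlier : ∑ i ∈ range k, ∑ j ∈ range i, a i * cut w (β i) (β j) ≤
      ∑ j ∈ range k, a j * cut w (β j) (α (j + 1)) := calc
    _ ≤ ∑ i ∈ range k, ∑ j ∈ range i, a j * cut w (β j) (β i) := by
        refine sum_le_sum fun i hi => sum_le_sum fun j hj => ?_
        rw [cut_comm hsymm]
        have hi := mem_range.1 hi
        have hj := mem_range.1 hj
        exact mul_le_mul_of_nonneg_right
          (hanti (Set.mem_Iio.2 (hj.trans hi)) (Set.mem_Iio.2 hi) hj.le) (cut_nonneg hw _ _)
    _ = ∑ j ∈ range k, ∑ i ∈ Ico (j + 1) k, a j * cut w (β j) (β i) :=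
        sum_comm' fun i j => by simp only [mem_range, mem_Ico]; omega
    _ = ∑ j ∈ range k, a j * ∑ i ∈ Ico (j + 1) k, cut w (β j) (β i) := by simp only [mul_sum]
    _ ≤ _ := by
        gcongr with j hj
        · exact ha j
        · exact hsplit.sum_cut_Ico_le hw (mem_range.1 hj)
  calc ∑ i ∈ range k, a i * cut w (β i) (β i)ᶜ
      = ∑ i ∈ range k, a i * cut w (β i) (α (i + 1)) +
          ∑ i ∈ range k, ∑ j ∈ range i, a i * cut w (β i) (β j) := by
        rw [← sum_add_distrib]
        refine sum_congr rfl fun i hi => ?_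
        rw [hsplit.cut_compl_eq huniv (mem_range.1 hi), mul_add, mul_sum]
    _ ≤ _ := by linarith

end Chain

section Tree

variable {V : Type} [DecidableEq V]

lemma leaves_node (l r : HCTree V) : leaves (node l r) = leaves l ∪ leaves r := by
  simp [leaves, leafList]

lemma leaves_nonempty (t : HCTree V) : (leaves t).Nonempty := by
  induction t with
  | leaf v => simp [leaves, leafList]
  | node l r ihl _ => rw [leaves_node]; exact ihl.mono subset_union_left

lemma nodup_leafList_node {l r : HCTree V} (h : (node l r).leafList.Nodup) :
    l.leafList.Nodup ∧ r.leafList.Nodup ∧ Disjoint (leaves l) (leaves r) := by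
  rw [leafList, List.nodup_append] at h
  refine ⟨h.1, h.2.1, ?_⟩
  rw [leaves, leaves, List.disjoint_toFinset_iff_disjoint]
  exact fun a ha hb => h.2.2 a ha a hb rfl

lemma cost_nonneg {w : V → V → ℝ} (hw : ∀ u v, 0 ≤ w u v) (t : HCTree V) : 0 ≤ cost w t := by
  induction t with
  | leaf v => simp [cost]
  | node l r ihl ihr =>
    have := cut_nonneg hw (leaves l) (leaves r)
    rw [cost]
    positivity

lemma cost_of_eq_node_or {w : V → V → ℝ} (hsymm : ∀ u v, w u v = w v u) {t l r : HCTree V}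
    (h : t = node l r ∨ t = node r l) :
    cost w t = (leaves t).card * cut w (leaves l) (leaves r) + cost w l + cost w r := by
  rcases h with rfl | rfl
  · rfl
  · rw [cost, cut_comm hsymm]
    ring

end Tree

namespace DenseBranch

variable {V : Type} [Fintype V] [DecidableEq V] {w : V → V → ℝ} {t : HCTree V} {k : ℕ}
  {A B : ℕ → HCTree V}

lemma eq_node_or (hdb : DenseBranch w t k A B) {i : ℕ} (hi : i < k) :
    A i = node (B (i + 1)) (A (i + 1)) ∨ A i = node (A (i + 1)) (B (i + 1)) :=
  (hdb.2.1 i hi).1.symm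

lemma nodup (hdb : DenseBranch w t k A B) (ht : t.leafList.Nodup) :
    ∀ i ≤ k, (A i).leafList.Nodup := by
  intro i
  induction i with
  | zero => exact fun _ => hdb.1 ▸ ht
  | succ n ih =>
    intro hn
    have h := ih (by omega)
    rcases hdb.eq_node_or (by omega : n < k) with he | he
    · exact (nodup_leafList_node (he ▸ h)).2.1
    · exact (nodup_leafList_node (he ▸ h)).1

lemma isChainSplit (hdb : DenseBranch w t k A B) (ht : t.leafList.Nodup) :
    IsChainSplit (fun i => leaves (A i)) (fun i => leaves (B (i + 1))) k := by
  intro i hi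
  dsimp only
  have h := hdb.nodup ht i hi.le
  rcases hdb.eq_node_or hi with he | he
  · exact ⟨(nodup_leafList_node (he ▸ h)).2.2.symm, by rw [he, leaves_node, union_comm]⟩
  · exact ⟨(nodup_leafList_node (he ▸ h)).2.2, by rw [he, leaves_node]⟩

lemma vol_le_half (hw : ∀ u v, 0 ≤ w u v) (hdb : DenseBranch w t k A B) (ht : t.leafList.Nodup)
    {i : ℕ} (hi : i < k) :
    vol w (leaves (B (i + 1))) ≤ vol w univ / 2 := by
  have hunion := vol_union (w := w) ((hdb.isChainSplit ht) i hi).1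
  have huniv := vol_le_vol_univ hw (leaves (A (i + 1)) ∪ leaves (B (i + 1)))
  have hdense := hdb.2.2.1 (i + 1) hi
  linarith

lemma sum_card_mul_cut_le_cost (hw : ∀ u v, 0 ≤ w u v) (hsymm : ∀ u v, w u v = w v u)
    (hdb : DenseBranch w t k A B) :
    ∑ i ∈ range k, ((leaves (A i)).card : ℝ) * cut w (leaves (B (i + 1))) (leaves (A (i + 1)))
      ≤ cost w t := by
  suffices h : ∀ j ≤ k, ∑ i ∈ range j,
      ((leaves (A i)).card : ℝ) * cut w (leaves (B (i + 1))) (leaves (A (i + 1))) +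
        cost w (A j) ≤ cost w t by
    linarith [h k le_rfl, cost_nonneg hw (A k)]
  intro j
  induction j with
  | zero => exact fun _ => by simp [hdb.1]
  | succ n ih =>
    intro hn
    have hsplit := cost_of_eq_node_or (w := w) hsymm (hdb.eq_node_or (by omega : n < k))
    rw [sum_range_succ]
    linarith [ih (by omega), cost_nonneg hw (B (n + 1))]

end DenseBranch

end HCTree

open HCTree in
theorem cost_lower_bound_dense_branch_general {V : Type} [Fintype V] [DecidableEq V]
    (w : V → V → ℝ) (hw : ∀ u v, 0 ≤ w u v) (hsymm : ∀ u v, w u v = w v u)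
    (Φ : ℝ)
    (hΦ : ∀ S : Finset V, S.Nonempty → vol w S ≤ vol w (Finset.univ : Finset V) / 2 →
      Φ * vol w S ≤ cut w S Sᶜ)
    (t : HCTree V) (ht : isHC t) (k : ℕ) (A B : ℕ → HCTree V)
    (hdb : DenseBranch w t k A B) :
    Φ / 2 * ∑ i ∈ Finset.range k,
        ((leaves (A i)).card : ℝ) * vol w (leaves (B (i+1)))
      ≤ cost w t := by
  have hsplit := hdb.isChainSplit ht.1
  have hcompl := hsplit.sum_mul_cut_compl_le hw hsymm (hdb.1 ▸ ht.2)
    (fun _ => Nat.cast_nonneg _) hsplit.antitoneOn_card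
  calc Φ / 2 * ∑ i ∈ range k, ((leaves (A i)).card : ℝ) * vol w (leaves (B (i+1)))
      = (∑ i ∈ range k, ((leaves (A i)).card : ℝ) * (Φ * vol w (leaves (B (i+1))))) / 2 := by
        rw [mul_sum, sum_div]
        exact sum_congr rfl fun _ _ => by ring
    _ ≤ (∑ i ∈ range k, ((leaves (A i)).card : ℝ) *
          cut w (leaves (B (i+1))) (leaves (B (i+1)))ᶜ) / 2 := by
        gcongr with i hi
        exact hΦ _ (leaves_nonempty _) (hdb.vol_le_half hw ht.1 (mem_range.1 hi))
    _ ≤ ∑ i ∈ range k,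
          ((leaves (A i)).card : ℝ) * cut w (leaves (B (i+1))) (leaves (A (i+1))) := by
        linarith
    _ ≤ cost w t := hdb.sum_card_mul_cut_le_cost hw hsymm

open HCTree in
/-- If `G` has conductance `Φ_G` and `T` is an HC tree with dense branch
`(A_0, …, A_k)`, where `B_i` is the sibling of `A_i`, then
`cost_G(T) ≥ (Φ_G/2) · ∑_{i=1}^{k} |A_{i-1}| · vol(B_i)`. -/
theorem cost_lower_bound_dense_branch {V : Type} [Fintype V] [DecidableEq V]
    (w : V → V → ℝ) (hw : ∀ u v, 0 ≤ w u v) (hsymm : ∀ u v, w u v = w v u)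
    (Φ : ℝ) (hΦ0 : 0 ≤ Φ)
    (hΦ : ∀ S : Finset V, S.Nonempty → vol w S ≤ vol w (Finset.univ : Finset V) / 2 →
      Φ * vol w S ≤ cut w S Sᶜ)
    (t : HCTree V) (ht : isHC t) (k : ℕ) (A B : ℕ → HCTree V)
    (hdb : DenseBranch w t k A B) :
    Φ / 2 * ∑ i ∈ Finset.range k,
        ((leaves (A i)).card : ℝ) * vol w (leaves (B (i+1)))
      ≤ cost w t :=
  cost_lower_bound_dense_branch_general w hw hsymm Φ hΦ t ht k A B hdb
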